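/- arXiv:2605.24386 — 3 statements merged into one kernel-verified Lean document; each statement's English description precedes it below -/
import Mathlib

section
/- For T₁, T₂ > 0 with T/2 = T₁T₂, the convolution of the logistic density ℓ_{T₁} with the function r(p) = 1_{p≥0} − 1_{p<0}, evaluated at p/T₂, equals tanh(p/T). -/
open MeasureTheory Filter Set Real Topology

/-- The logistic density: ℓ_T(p) = e^{p/T}/(T(e^{p/T}+1)²). -/
noncomputable def logisticDen (T p : ℝ) : ℝ :=
  Real.exp (p / T) / (T * (Real.exp (p / T) + 1) ^ 2)

/-- The sign-like function r(p) = 1_{p≥0} − 1_{p<0}. -/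
noncomputable def signFn (p : ℝ) : ℝ := if 0 ≤ p then 1 else -1

/-!
`ℓ_c` is the derivative of `y ↦ σ(y / c)`, where `σ` is the sigmoid, which rises from `0` to `1`.
Convolving a derivative `g'` with the sign function integrates it over `(-∞, x]` with weight `1`
and over `(x, ∞)` with weight `-1`, which gives `2 σ(x / c) - 1 = tanh (x / (2c))`.
-/

section DerivOfLimits

variable {g g' : ℝ → ℝ} {m n : ℝ}

theorem integrable_deriv_of_nonneg (hderiv : ∀ x, HasDerivAt g (g' x) x) (hg' : ∀ x, 0 ≤ g' x)
    (hbot : Tendsto g atBot (𝓝 m)) (htop : Tendsto g atTop (𝓝 n)) : Integrable g' := by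
  have hcont : Continuous g := continuous_iff_continuousAt.2 fun x ↦ (hderiv x).continuousAt
  have hFTC (a b : ℝ) : ∫ y in a..b, g' y = g b - g a :=
    intervalIntegral.integral_eq_sub_of_hasDerivAt (fun y _ ↦ hderiv y)
      (intervalIntegral.intervalIntegrable_deriv_of_nonneg hcont.continuousOn
        (fun y _ ↦ hderiv y) fun y _ ↦ hg' y)
  refine integrable_of_intervalIntegral_norm_tendsto (n - m) (fun i ↦
    intervalIntegral.integrableOn_deriv_of_nonneg hcont.continuousOn (fun y _ ↦ hderiv y)
      fun y _ ↦ hg' y) tendsto_neg_atTop_atBot tendsto_id ?_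
  simp_rw [Real.norm_of_nonneg (hg' _), hFTC]
  exact htop.sub (hbot.comp tendsto_neg_atTop_atBot)

theorem integral_mul_signFn_sub (hderiv : ∀ x, HasDerivAt g (g' x) x) (hint : Integrable g')
    (hbot : Tendsto g atBot (𝓝 m)) (htop : Tendsto g atTop (𝓝 n)) (x : ℝ) :
    ∫ y, g' y * signFn (x - y) = 2 * g x - m - n := by
  have hIic : EqOn (fun y ↦ g' y * signFn (x - y)) g' (Iic x) := fun y hy ↦ by
    simp [signFn, sub_nonneg.2 (mem_Iic.1 hy)]
  have hIoi : EqOn (fun y ↦ g' y * signFn (x - y)) (fun y ↦ -g' y) (Ioi x) := fun y hy ↦ by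
    simp [signFn, not_le.2 (mem_Ioi.1 hy)]
  rw [← intervalIntegral.integral_Iic_add_Ioi
      (hint.integrableOn.congr_fun hIic.symm measurableSet_Iic)
      (hint.neg.integrableOn.congr_fun hIoi.symm measurableSet_Ioi),
    setIntegral_congr_fun measurableSet_Iic hIic, setIntegral_congr_fun measurableSet_Ioi hIoi,
    integral_neg, integral_Iic_of_hasDerivAt_of_tendsto' (fun y _ ↦ hderiv y) hint.integrableOn hbot,
    integral_Ioi_of_hasDerivAt_of_tendsto' (fun y _ ↦ hderiv y) hint.integrableOn htop]
  ring

end DerivOfLimits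

theorem logisticDen_eq_sigmoid (c y : ℝ) :
    logisticDen c y = sigmoid (y / c) * (1 - sigmoid (y / c)) / c := by
  have he : exp (-(y / c)) = (exp (y / c))⁻¹ := exp_neg _
  have hpos := exp_pos (y / c)
  rw [logisticDen, sigmoid_def, he]
  field_simp
  ring

theorem hasDerivAt_sigmoid_div (c y : ℝ) :
    HasDerivAt (fun y ↦ sigmoid (y / c)) (logisticDen c y) y := by
  have h := (hasDerivAt_sigmoid (y / c)).comp y ((hasDerivAt_id y).div_const c)
  rwa [logisticDen_eq_sigmoid, div_eq_mul_one_div _ c]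

theorem logisticDen_nonneg {c : ℝ} (hc : 0 ≤ c) (y : ℝ) : 0 ≤ logisticDen c y := by
  unfold logisticDen
  positivity

theorem two_mul_sigmoid_two_mul_sub_one (u : ℝ) : 2 * sigmoid (2 * u) - 1 = tanh u := by
  have he : exp (-(2 * u)) = (exp u ^ 2)⁻¹ := by rw [exp_neg, ← exp_nat_mul]; norm_num
  have hpos := exp_pos u
  rw [sigmoid_def, tanh_eq, he, exp_neg]
  field_simp
  ring

theorem logistic_conv_sign_eq_tanh_general (T₁ T₂ T : ℝ) (h1 : 0 < T₁)
    (hT : T / 2 = T₁ * T₂) (p : ℝ) :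
    (∫ y : ℝ, logisticDen T₁ y * signFn (p / T₂ - y)) = Real.tanh (p / T) := by
  have hderiv := hasDerivAt_sigmoid_div T₁
  have hbot : Tendsto (fun y ↦ sigmoid (y / T₁)) atBot (𝓝 0) :=
    tendsto_sigmoid_atBot.comp (tendsto_id.atBot_div_const h1)
  have htop : Tendsto (fun y ↦ sigmoid (y / T₁)) atTop (𝓝 1) :=
    tendsto_sigmoid_atTop.comp (tendsto_id.atTop_div_const h1)
  have hint := integrable_deriv_of_nonneg hderiv (logisticDen_nonneg h1.le) hbot htop
  have hscale : p / T₂ / T₁ = 2 * (p / T) := by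
    rw [show T = 2 * (T₁ * T₂) by linarith]
    ring
  rw [integral_mul_signFn_sub hderiv hint hbot htop, hscale, ← two_mul_sigmoid_two_mul_sub_one]
  ring

/-- (ℓ_{T₁} * r)(p/T₂) = tanh(p/T) where T/2 = T₁T₂. -/
theorem logistic_conv_sign_eq_tanh (T₁ T₂ T : ℝ) (h1 : 0 < T₁) (h2 : 0 < T₂)
    (hT : T / 2 = T₁ * T₂) (p : ℝ) :
    (∫ y : ℝ, logisticDen T₁ y * signFn (p / T₂ - y)) = Real.tanh (p / T) :=
  logistic_conv_sign_eq_tanh_general T₁ T₂ T h1 hT p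
end

section
/- For T₁, T₂ > 0 with T = T₁T₂, the convolution of ReLU with the logistic density ℓ_{T₁}, evaluated at a/T₂ and scaled by T₂, equals the softplus function: T₂·(ReLU * ℓ_{T₁})(a/T₂) = T·ln(1 + e^{a/T}) for all real a. -/
open MeasureTheory

/-!
Proof idea: `ℓ_T` is the derivative of the logistic distribution function
`σ_T(p) = e^{p/T}/(e^{p/T}+1)`, which in turn is the derivative of the softplus `r_T`.
Hence `y ↦ -y σ_T(x - y) - r_T(x - y)` is a primitive of `y ↦ y ℓ_T(x - y)`; it tends to `0`
at `+∞` and equals `-r_T(x)` at `0`, so `(ReLU * ℓ_T)(x) = ∫_0^∞ y ℓ_T(x - y) dy = r_T(x)`.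
Finally `T₂ r_{T₁}(a/T₂) = r_{T₁T₂}(a)`.
-/

open Filter Topology Set

noncomputable def logisticCDF (T p : ℝ) : ℝ :=
  Real.exp (p / T) / (Real.exp (p / T) + 1)

noncomputable def softplus (T a : ℝ) : ℝ :=
  T * Real.log (1 + Real.exp (a / T))

theorem hasDerivAt_exp_div (T a : ℝ) :
    HasDerivAt (fun a => Real.exp (a / T)) (Real.exp (a / T) / T) a := by
  simpa [div_eq_mul_inv, mul_comm] using ((hasDerivAt_id a).div_const T).exp

section Logistic

variable {T : ℝ}

theorem logisticDen_nonneg_s5 (hT : 0 ≤ T) (p : ℝ) : 0 ≤ logisticDen T p := by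
  unfold logisticDen
  positivity

theorem hasDerivAt_logisticCDF (hT : T ≠ 0) (p : ℝ) :
    HasDerivAt (logisticCDF T) (logisticDen T p) p := by
  have hexp := hasDerivAt_exp_div T p
  have hne : Real.exp (p / T) + 1 ≠ 0 := by positivity
  refine (hexp.div (hexp.add_const 1) hne).congr_deriv ?_
  unfold logisticDen
  field_simp
  ring

theorem hasDerivAt_softplus (hT : T ≠ 0) (a : ℝ) :
    HasDerivAt (softplus T) (logisticCDF T a) a := by
  have hexp := hasDerivAt_exp_div T a
  have hne : 1 + Real.exp (a / T) ≠ 0 := by positivity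
  refine (((hexp.const_add 1).log hne).const_mul T).congr_deriv ?_
  unfold logisticCDF
  field_simp
  ring

theorem tendsto_mul_exp_atBot : Tendsto (fun z : ℝ => z * Real.exp z) atBot (𝓝 0) := by
  have h := ((Real.tendsto_pow_mul_exp_neg_atTop_nhds_zero 1).comp tendsto_neg_atBot_atTop).neg
  simpa using h

theorem tendsto_exp_div_atBot (hT : 0 < T) :
    Tendsto (fun p => Real.exp (p / T)) atBot (𝓝 0) :=
  Real.tendsto_exp_atBot.comp (tendsto_id.atBot_div_const hT)

theorem tendsto_logisticCDF_atBot (hT : 0 < T) : Tendsto (logisticCDF T) atBot (𝓝 0) := by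
  have h := (tendsto_exp_div_atBot hT).div ((tendsto_exp_div_atBot hT).add_const 1) (by norm_num)
  rwa [zero_add, zero_div] at h

theorem tendsto_mul_logisticCDF_atBot (hT : 0 < T) :
    Tendsto (fun p => p * logisticCDF T p) atBot (𝓝 0) := by
  have hmul : Tendsto (fun p => T * (p / T * Real.exp (p / T))) atBot (𝓝 0) := by
    simpa using (tendsto_mul_exp_atBot.comp (tendsto_id.atBot_div_const hT)).const_mul T
  have h := hmul.div ((tendsto_exp_div_atBot hT).add_const 1) (by norm_num)
  rw [zero_div] at h
  refine h.congr fun p => ?_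
  simp only [Pi.div_apply, logisticCDF]
  field_simp

theorem tendsto_softplus_atBot (hT : 0 < T) : Tendsto (softplus T) atBot (𝓝 0) := by
  have hlog := (Real.continuousAt_log (by norm_num : (1 + 0 : ℝ) ≠ 0)).tendsto.comp
    ((tendsto_exp_div_atBot hT).const_add 1)
  have h := hlog.const_mul T
  rwa [add_zero, Real.log_one, mul_zero] at h

end Logistic

theorem integral_max_zero_mul (f : ℝ → ℝ) :
    ∫ y, max 0 y * f y = ∫ y in Ioi 0, y * f y := by
  have hvanish : ∀ y ∉ Ioi (0 : ℝ), max 0 y * f y = 0 := fun y hy => by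
    rw [max_eq_left (not_lt.mp hy), zero_mul]
  rw [← setIntegral_eq_integral_of_forall_compl_eq_zero hvanish]
  exact setIntegral_congr_fun measurableSet_Ioi fun y hy => by rw [max_eq_right hy.le]

theorem integral_max_zero_mul_logisticDen_sub {T : ℝ} (hT : 0 < T) (x : ℝ) :
    ∫ y, max 0 y * logisticDen T (x - y) = softplus T x := by
  set F : ℝ → ℝ := fun y => -(y * logisticCDF T (x - y)) - softplus T (x - y) with hF_def
  have hF : ∀ y, HasDerivAt F (y * logisticDen T (x - y)) y := fun y => by
    have hσ := (hasDerivAt_logisticCDF hT.ne' (x - y)).comp_const_sub x y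
    have hs := (hasDerivAt_softplus hT.ne' (x - y)).comp_const_sub x y
    refine (((hasDerivAt_id' y).mul hσ).neg.sub hs).congr_deriv ?_
    ring
  have hF_atTop : Tendsto F atTop (𝓝 0) := by
    have hsub : Tendsto (fun y => x - y) atTop atBot := by
      simpa [sub_eq_add_neg] using tendsto_atBot_add_const_left _ x tendsto_neg_atTop_atBot
    -- `y σ(x - y) = x σ(x - y) - (x - y) σ(x - y)`
    have h := ((((tendsto_logisticCDF_atBot hT).comp hsub).const_mul x).sub
      ((tendsto_mul_logisticCDF_atBot hT).comp hsub)).neg.sub ((tendsto_softplus_atBot hT).comp hsub)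
    rw [mul_zero, sub_zero, sub_zero, neg_zero] at h
    refine h.congr fun y => ?_
    simp only [hF_def, Function.comp_apply]
    ring
  rw [integral_max_zero_mul, integral_Ioi_of_hasDerivAt_of_nonneg' (fun y _ => hF y)
    (fun y hy => mul_nonneg hy.le (logisticDen_nonneg_s5 hT.le _)) hF_atTop]
  simp [hF_def]

theorem relu_conv_logistic_scaled_eq_softplus_general (T₁ T₂ T : ℝ) (h1 : 0 < T₁)
    (hT : T = T₁ * T₂) (a : ℝ) :
    T₂ * ∫ y : ℝ, max 0 y * logisticDen T₁ (a / T₂ - y) =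
      T * Real.log (1 + Real.exp (a / T)) := by
  rw [integral_max_zero_mul_logisticDen_sub h1, softplus, div_div, mul_comm T₂ T₁, hT]
  ring

/-- T₂·(ReLU * ℓ_{T₁})(a/T₂) = T·ln(1 + e^{a/T}) with T = T₁T₂. -/
theorem relu_conv_logistic_scaled_eq_softplus (T₁ T₂ T : ℝ) (h1 : 0 < T₁) (h2 : 0 < T₂)
    (hT : T = T₁ * T₂) (a : ℝ) :
    T₂ * ∫ y : ℝ, max 0 y * logisticDen T₁ (a / T₂ - y) =
      T * Real.log (1 + Real.exp (a / T)) :=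
  relu_conv_logistic_scaled_eq_softplus_general T₁ T₂ T h1 hT a
end

section
/- The Fourier representation sech²(x) = ∫_ℝ μ(t)·e^{itx} dt holds for all real x, where μ(t) = t/(2·sinh(πt/2)). -/
open MeasureTheory

/-- μ(t) = t/(2·sinh(πt/2)) for t ≠ 0, extended continuously by μ(0) = 1/π. -/
noncomputable def muDen (t : ℝ) : ℝ :=
  if t = 0 then 1 / Real.pi else t / (2 * Real.sinh (Real.pi * t / 2))

/-!
The substitution `v = σ(2x)` (`σ` the logistic sigmoid) has `dv = sech²(x)/2 dx` and
`v / (1 - v) = e^{2x}`, so it turns `∫ sech²(x) e^{2sx} dx` into the Beta integral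
`2 B(1 + s, 1 - s) = 2π s / sin(π s)`. At `s = -iπw` this says that the Fourier transform of
`sech²` is `w ↦ 2π μ(2πw)`. Both `sech²` and `μ` are dominated by multiples of (rescaled)
`sech`, hence integrable, and Fourier inversion at `x` followed by the change of variables
`t = 2πw` gives the formula.
-/

open Set
open scoped FourierTransform Real

namespace Real

lemma one_add_sq_le_four_mul_cosh (x : ℝ) : 1 + x ^ 2 ≤ 4 * cosh x := by
  rw [← cosh_abs, cosh_eq]
  have h₁ := quadratic_le_exp_of_nonneg (abs_nonneg x)
  have h₂ := add_one_le_exp (-|x|)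
  nlinarith [sq_abs x]

lemma integrable_inv_cosh : Integrable fun x : ℝ => (cosh x)⁻¹ := by
  refine (integrable_inv_one_add_sq.const_mul 4).mono' (by fun_prop) (.of_forall fun x => ?_)
  rw [norm_inv, norm_of_nonneg (cosh_pos x).le, ← div_eq_mul_inv,
    inv_le_comm₀ (cosh_pos x) (by positivity), inv_div, div_le_iff₀' four_pos]
  exact one_add_sq_le_four_mul_cosh x

lemma sigmoid_two_mul_mul_one_sub_sigmoid_two_mul (x : ℝ) :
    sigmoid (2 * x) * (1 - sigmoid (2 * x)) = (1 / cosh x) ^ 2 / 4 := by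
  have h₂ : exp (2 * x) = exp x ^ 2 := by rw [← exp_nat_mul]; norm_num
  rw [← sigmoid_neg, sigmoid_def, sigmoid_def, neg_neg, cosh_eq, exp_neg, exp_neg, h₂]
  have := exp_pos x
  field_simp
  ring

lemma sigmoid_eq_one_sub_sigmoid_mul_exp (x : ℝ) : sigmoid x = (1 - sigmoid x) * exp x := by
  rw [← sigmoid_neg, ← sigmoid_mul_rexp_neg, mul_assoc, ← exp_add, neg_add_cancel, exp_zero,
    mul_one]

lemma fourierInv_comp_two_pi_mul_eq_integral (g : ℝ → ℂ) (x : ℝ) :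
    𝓕⁻ (fun w : ℝ => (2 * π : ℂ) * g (2 * π * w)) x =
      ∫ t : ℝ, g t * Complex.exp (Complex.I * t * x) := by
  rw [fourierInv_eq_fourier_neg, fourier_real_eq_integral_exp_smul]
  calc ∫ w : ℝ, Complex.exp (↑(-2 * π * w * -x) * Complex.I) •
        ((2 * π : ℂ) * g (2 * π * w))
      = (2 * π : ℝ) •
          ∫ w : ℝ, (fun t : ℝ => g t * Complex.exp (Complex.I * t * x)) (2 * π * w) := by
        rw [← integral_smul]
        congr 1 with w
        rw [smul_eq_mul, Complex.real_smul]
        push_cast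
        rw [show -2 * π * w * -x * Complex.I = Complex.I * (2 * π * w) * x by ring]
        ring
    _ = ∫ t : ℝ, g t * Complex.exp (Complex.I * t * x) := by
        rw [Measure.integral_comp_mul_left (fun t : ℝ => g t * Complex.exp (Complex.I * t * x)),
          smul_smul, abs_of_pos (by positivity), mul_inv_cancel₀ (by positivity), one_smul]

end Real

namespace Complex

lemma sigmoid_cpow_mul_one_sub_sigmoid_cpow_neg (x : ℝ) (s : ℂ) :
    (Real.sigmoid x : ℂ) ^ s * (1 - Real.sigmoid x : ℂ) ^ (-s) = exp (x * s) := by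
  have h₁ : 0 < 1 - Real.sigmoid x := sub_pos.2 (Real.sigmoid_lt_one x)
  have hcancel : (1 - Real.sigmoid x : ℂ) ^ s * (1 - Real.sigmoid x : ℂ) ^ (-s) = 1 := by
    rw [← cpow_add _ _ (by exact_mod_cast h₁.ne'), add_neg_cancel, cpow_zero]
  nth_rw 1 [Real.sigmoid_eq_one_sub_sigmoid_mul_exp x]
  rw [ofReal_mul, mul_cpow_ofReal_nonneg h₁.le (Real.exp_pos x).le, mul_right_comm,
    ofReal_sub, ofReal_one, hcancel, one_mul,
    cpow_def_of_ne_zero (by exact_mod_cast (Real.exp_pos x).ne'),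
    ← ofReal_log (Real.exp_pos x).le, Real.log_exp]

lemma betaIntegral_eq_integral_Ioo (u v : ℂ) :
    betaIntegral u v =
      ∫ x in Ioo (0 : ℝ) 1, (x : ℂ) ^ (u - 1) * (1 - (x : ℂ)) ^ (v - 1) := by
  rw [betaIntegral, intervalIntegral.integral_of_le zero_le_one, integral_Ioc_eq_integral_Ioo]

lemma integral_sech_sq_mul_exp (s : ℂ) :
    ∫ x : ℝ, (((1 / Real.cosh x) ^ 2 : ℝ) : ℂ) * exp (2 * s * x) =
      2 * betaIntegral (1 + s) (1 - s) := by
  set f : ℝ → ℝ := fun x => Real.sigmoid (2 * x)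
  have hf' (x : ℝ) : HasDerivAt f (2 * (f x * (1 - f x))) x := by
    have := (Real.hasDerivAt_sigmoid (2 * x)).comp x ((hasDerivAt_id x).const_mul 2)
    rwa [mul_one, mul_comm] at this
  have hf_inj : InjOn f univ :=
    (Real.sigmoid_injective.comp (mul_right_injective₀ two_ne_zero)).injOn
  have hf_range : f '' univ = Ioo 0 1 := by
    rw [image_univ, ← Real.range_sigmoid]
    exact (mul_left_surjective₀ (two_ne_zero' ℝ)).range_comp Real.sigmoid
  have hsubst := integral_image_eq_integral_abs_deriv_smul MeasurableSet.univ
    (fun x _ => (hf' x).hasDerivWithinAt) hf_inj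
    (fun v : ℝ => (v : ℂ) ^ ((1 + s) - 1) * (1 - (v : ℂ)) ^ ((1 - s) - 1))
  rw [hf_range, Measure.restrict_univ, ← betaIntegral_eq_integral_Ioo] at hsubst
  rw [hsubst, ← integral_const_mul]
  congr 1 with x
  rw [add_sub_cancel_left, sub_sub_cancel_left, sigmoid_cpow_mul_one_sub_sigmoid_cpow_neg,
    Real.sigmoid_two_mul_mul_one_sub_sigmoid_two_mul, abs_of_nonneg (by positivity), real_smul]
  push_cast
  rw [mul_right_comm 2 s]
  ring

lemma betaIntegral_one_add_one_sub {s : ℂ} (hs : s ≠ 0) (h₁ : -1 < s.re) (h₂ : s.re < 1) :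
    betaIntegral (1 + s) (1 - s) = π * s / sin (π * s) := by
  have h := Gamma_mul_Gamma_eq_betaIntegral (s := 1 + s) (t := 1 - s) (by simp; linarith)
    (by simp; linarith)
  rw [add_add_sub_cancel, show (1 : ℂ) + 1 = 2 by norm_num, Gamma_ofNat_eq_factorial,
    Nat.factorial_one, Nat.cast_one, one_mul, add_comm, Gamma_add_one s hs, mul_assoc,
    Gamma_mul_Gamma_one_sub] at h
  rw [add_comm 1 s, ← h]
  ring

end Complex

lemma betaIntegral_one_add_mul_I_eq_muDen (u : ℝ) :
    Complex.betaIntegral (1 + u * Complex.I) (1 - u * Complex.I) = π * muDen (2 * u) := by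
  rcases eq_or_ne u 0 with rfl | hu
  · simp [muDen, Complex.betaIntegral_eval_one_right]
  · have hsinh : Real.sinh (π * u) ≠ 0 := by simp [Real.pi_ne_zero, hu]
    rw [Complex.betaIntegral_one_add_one_sub (by simp [hu]) (by simp) (by simp), ← mul_assoc,
      ← Complex.ofReal_mul, Complex.sin_mul_I, ← Complex.ofReal_sinh, muDen,
      if_neg (by simpa using hu)]
    push_cast
    field_simp

lemma muDen_eq_of_ne_zero {t : ℝ} (ht : t ≠ 0) :
    muDen t = π⁻¹ * (π / 4 * t / Real.sinh (π / 4 * t)) * (Real.cosh (π / 4 * t))⁻¹ := by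
  have hsinh : Real.sinh (π / 4 * t) ≠ 0 := by simp [Real.pi_ne_zero, ht]
  have hcosh := (Real.cosh_pos (π / 4 * t)).ne'
  rw [muDen, if_neg ht, show π * t / 2 = 2 * (π / 4 * t) by ring, Real.sinh_two_mul]
  field_simp
  ring

lemma abs_muDen_le (t : ℝ) : |muDen t| ≤ π⁻¹ * (Real.cosh (π / 4 * t))⁻¹ := by
  rcases eq_or_ne t 0 with rfl | ht
  · simp [muDen, abs_of_pos Real.pi_pos]
  · set v := π / 4 * t
    have hv : |v / Real.sinh v| ≤ 1 := by
      rw [abs_div, Real.abs_sinh]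
      exact div_le_one_of_le₀ (Real.self_le_sinh_iff.2 (abs_nonneg v))
        (Real.sinh_nonneg_iff.2 (abs_nonneg v))
    rw [muDen_eq_of_ne_zero ht, abs_mul, abs_mul, abs_of_pos (inv_pos.2 Real.pi_pos),
      abs_of_pos (inv_pos.2 (Real.cosh_pos v))]
    exact mul_le_mul_of_nonneg_right (mul_le_of_le_one_right (by positivity) hv) (by positivity)

lemma measurable_muDen : Measurable muDen :=
  Measurable.ite (measurableSet_singleton 0) measurable_const (by fun_prop)

lemma integrable_muDen : Integrable muDen :=
  ((Real.integrable_inv_cosh.comp_mul_left' (by positivity)).const_mul π⁻¹).mono'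
    measurable_muDen.aestronglyMeasurable (.of_forall abs_muDen_le)

lemma continuous_sech_sq : Continuous fun x : ℝ => (((1 / Real.cosh x) ^ 2 : ℝ) : ℂ) :=
  Complex.continuous_ofReal.comp
    ((continuous_const.div Real.continuous_cosh fun x => (Real.cosh_pos x).ne').pow 2)

lemma integrable_sech_sq : Integrable fun x : ℝ => (((1 / Real.cosh x) ^ 2 : ℝ) : ℂ) := by
  refine Real.integrable_inv_cosh.mono' continuous_sech_sq.aestronglyMeasurable
    (.of_forall fun x => ?_)
  have h₀ : 0 ≤ 1 / Real.cosh x := by positivity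
  have h₁ : 1 / Real.cosh x ≤ 1 := div_le_one_of_le₀ (Real.one_le_cosh x) (Real.cosh_pos x).le
  rw [Complex.norm_real, Real.norm_of_nonneg (by positivity), ← one_div]
  exact pow_le_of_le_one h₀ h₁ two_ne_zero

lemma fourier_sech_sq :
    𝓕 (fun x : ℝ => (((1 / Real.cosh x) ^ 2 : ℝ) : ℂ)) =
      fun w : ℝ => (2 * π : ℂ) * muDen (2 * π * w) := by
  ext w
  rw [Real.fourier_real_eq_integral_exp_smul]
  calc _ = ∫ x : ℝ, (((1 / Real.cosh x) ^ 2 : ℝ) : ℂ) *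
        Complex.exp (2 * ((-(π * w) : ℝ) * Complex.I) * x) := by
        congr 1 with x
        rw [smul_eq_mul, mul_comm]
        congr 2
        push_cast
        ring
    _ = _ := by
        rw [Complex.integral_sech_sq_mul_exp, Complex.betaIntegral_symm,
          show 1 - ((-(π * w) : ℝ) : ℂ) * Complex.I = 1 + (π * w : ℝ) * Complex.I by
            push_cast; ring,
          show 1 + ((-(π * w) : ℝ) : ℂ) * Complex.I = 1 - (π * w : ℝ) * Complex.I by
            push_cast; ring,
          betaIntegral_one_add_mul_I_eq_muDen, mul_assoc 2 π w]
        ring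

/-- Fourier representation: sech²(x) = ∫ μ(t)·e^{itx} dt. -/
theorem sech_sq_eq_fourier_mu (x : ℝ) :
    (∫ t : ℝ, (muDen t : ℂ) * Complex.exp (Complex.I * t * x)) =
      (((1 / Real.cosh x) ^ 2 : ℝ) : ℂ) := by
  have integrable_fourier :
      Integrable (𝓕 fun x : ℝ => (((1 / Real.cosh x) ^ 2 : ℝ) : ℂ)) := by
    rw [fourier_sech_sq]
    exact (Integrable.comp_mul_left' (g := fun t => (muDen t : ℂ)) integrable_muDen.ofReal
      (by positivity : (2 * π : ℝ) ≠ 0)).const_mul _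
  have hinv := integrable_sech_sq.fourierInv_fourier_eq integrable_fourier
    continuous_sech_sq.continuousAt (v := x)
  rwa [fourier_sech_sq,
    Real.fourierInv_comp_two_pi_mul_eq_integral fun t => (muDen t : ℂ)] at hinv
end
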